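/- arXiv:2509.17624 — 2 statements merged into one kernel-verified Lean document; each statement's English description precedes it below -/
import Mathlib

section
/- Let γ ∈ ℤ^{d+2} be a vector with all components nonzero, r of which are negative and s positive (r + s = d + 2), Σ_j γ_j = 0, and gcd(γ_1,…,γ_{d+2}) = 1; let δ ∈ ℤ^{d+2} with Σ_j δ_j ≡ 0 (mod N). If (α; β) ∈ ℚ^n × ℚ^n are the hypergeometric parameters obtained by cancelling common factors in the rational function Π_{γ_j<0}(T^{-γ_j} - ζ_N^{δ_j}) / Π_{γ_j>0}(T^{γ_j} - ζ_N^{-δ_j}) = Π_j(T - e^{2πiα_j}) / Π_j(T - e^{2πiβ_j}), then Σ_{i=1}^n (α_i - β_i) ≡ (r - s)/2 (mod ℤ); in particular Σ_i α_i - β_i is a half-integer. -/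
open Polynomial

/-- `e2pi x = e^{2πix}`. -/
noncomputable def e2pi (x : ℚ) : ℂ := Complex.exp (2 * Real.pi * Complex.I * x)

/-- The polynomial `∏ⱼ (T - e^{2πi αⱼ})` attached to hypergeometric parameters. -/
noncomputable def paramPoly {n : ℕ} (α : Fin n → ℚ) : Polynomial ℂ :=
  ∏ i, (X - C (e2pi (α i)))

/-! Comparing constant terms: the constant term of `T^m - e^{2πix}` (for `m ≠ 0`) is
`e^{2πi(x + 1/2)}`, so evaluating both sides of the defining identity at `T = 0` gives
`e^{2πi(Σ_{γⱼ<0} δⱼ/N + r/2 + Σβ)} = e^{2πi(-Σ_{γⱼ>0} δⱼ/N + s/2 + Σα)}`.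
Since `Σⱼ δⱼ/N` is an integer, `Σα - Σβ ≡ (r - s)/2` modulo `ℤ`. -/

lemma e2pi_zero : e2pi 0 = 1 := by
  simp [e2pi]

lemma e2pi_add (x y : ℚ) : e2pi (x + y) = e2pi x * e2pi y := by
  rw [e2pi, e2pi, e2pi, ← Complex.exp_add]
  push_cast
  ring_nf

lemma e2pi_sum {ι : Type*} (S : Finset ι) (f : ι → ℚ) :
    e2pi (∑ j ∈ S, f j) = ∏ j ∈ S, e2pi (f j) := by
  classical
  induction S using Finset.induction_on with
  | empty => simp [e2pi_zero]
  | insert a S ha ih => rw [Finset.sum_insert ha, Finset.prod_insert ha, e2pi_add, ih]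

lemma e2pi_half : e2pi (1 / 2) = -1 := by
  rw [e2pi, ← Complex.exp_pi_mul_I]
  push_cast
  ring_nf

lemma exists_int_sub_eq_of_e2pi_eq {x y : ℚ} (h : e2pi x = e2pi y) : ∃ z : ℤ, x - y = z := by
  obtain ⟨z, hz⟩ := Complex.exp_eq_exp_iff_exists_int.mp h
  refine ⟨z, ?_⟩
  have h2πi : (2 : ℂ) * Real.pi * Complex.I ≠ 0 := by
    simp [Real.pi_ne_zero, Complex.I_ne_zero]
  have hcast : ((x - y : ℚ) : ℂ) = (z : ℂ) := by
    apply mul_left_cancel₀ h2πi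
    push_cast
    linear_combination hz
  exact_mod_cast hcast

lemma eval_zero_X_pow_sub_C_e2pi {m : ℕ} (hm : m ≠ 0) (x : ℚ) :
    eval 0 (X ^ m - C (e2pi x)) = e2pi (x + 1 / 2) := by
  rw [eval_sub, eval_pow, eval_X, eval_C, zero_pow hm, zero_sub, e2pi_add, e2pi_half, mul_neg_one]

lemma eval_zero_prod_X_pow_sub_C_e2pi {ι : Type*} (S : Finset ι) (m : ι → ℕ) (x : ι → ℚ)
    (hm : ∀ j ∈ S, m j ≠ 0) :
    eval 0 (∏ j ∈ S, (X ^ m j - C (e2pi (x j)))) = e2pi (∑ j ∈ S, x j + S.card / 2) := by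
  rw [eval_prod, Finset.prod_congr rfl fun j hj => eval_zero_X_pow_sub_C_e2pi (hm j hj) (x j),
    ← e2pi_sum, Finset.sum_add_distrib, Finset.sum_const, nsmul_eq_mul, mul_one_div]

lemma eval_zero_paramPoly {n : ℕ} (α : Fin n → ℚ) :
    eval 0 (paramPoly α) = e2pi (∑ i, α i + n / 2) := by
  have h := eval_zero_prod_X_pow_sub_C_e2pi Finset.univ (fun _ => 1) α fun _ _ => one_ne_zero
  simpa only [pow_one, Finset.card_univ, Fintype.card_fin, paramPoly] using h

lemma Finset.sum_filter_neg_add_sum_filter_pos {ι M : Type*} [Fintype ι] [AddCommMonoid M]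
    {γ : ι → ℤ} (hγ : ∀ j, γ j ≠ 0) (f : ι → M) :
    ∑ j ∈ univ.filter (fun j => γ j < 0), f j + ∑ j ∈ univ.filter (fun j => 0 < γ j), f j =
      ∑ j, f j := by
  rw [← sum_filter_add_sum_filter_not univ (fun j => γ j < 0)]
  congr 2
  exact filter_congr fun j _ => by have := hγ j; omega

lemma exists_int_div_eq_of_dvd {N : ℕ} {m : ℤ} (h : (N : ℤ) ∣ m) : ∃ k : ℤ, (m : ℚ) / N = k := by
  obtain ⟨k, rfl⟩ := h
  rcases eq_or_ne N 0 with rfl | hN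
  · exact ⟨0, by simp⟩
  · exact ⟨k, by push_cast; field_simp⟩

theorem stmt_11_general (d N n : ℕ)
    (γ δ : Fin (d + 2) → ℤ)
    (hγ0 : ∀ j, γ j ≠ 0)
    (hδ : (N : ℤ) ∣ ∑ j, δ j)
    (r s : ℕ)
    (hr : r = (Finset.univ.filter fun j => γ j < 0).card)
    (hs : s = (Finset.univ.filter fun j => 0 < γ j).card)
    (α β : Fin n → ℚ)
    (heq : (∏ j ∈ Finset.univ.filter fun j => γ j < 0,
          (X ^ (-γ j).toNat - C (e2pi ((δ j : ℚ) / N)))) * paramPoly β =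
        (∏ j ∈ Finset.univ.filter fun j => 0 < γ j,
          (X ^ (γ j).toNat - C (e2pi (-(δ j : ℚ) / N)))) * paramPoly α) :
    ∃ z : ℤ, (∑ i, (α i - β i)) = ((r : ℚ) - s) / 2 + z := by
  have hneg : ∀ j ∈ Finset.univ.filter fun j => γ j < 0, (-γ j).toNat ≠ 0 := by
    intro j hj
    simp only [Finset.mem_filter] at hj
    omega
  have hpos : ∀ j ∈ Finset.univ.filter fun j => 0 < γ j, (γ j).toNat ≠ 0 := by
    intro j hj
    simp only [Finset.mem_filter] at hj
    omega
  have h0 := congrArg (eval 0) heq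
  rw [eval_mul, eval_mul, eval_zero_prod_X_pow_sub_C_e2pi _ _ _ hneg,
    eval_zero_prod_X_pow_sub_C_e2pi _ _ _ hpos, eval_zero_paramPoly, eval_zero_paramPoly,
    ← e2pi_add, ← e2pi_add, ← hr, ← hs] at h0
  obtain ⟨z, hz⟩ := exists_int_sub_eq_of_e2pi_eq h0
  obtain ⟨k, hk⟩ := exists_int_div_eq_of_dvd hδ
  have hδsplit : ∑ j ∈ Finset.univ.filter (fun j => γ j < 0), (δ j : ℚ) / N +
      ∑ j ∈ Finset.univ.filter (fun j => 0 < γ j), (δ j : ℚ) / N = k := by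
    rw [Finset.sum_filter_neg_add_sum_filter_pos hγ0, ← Finset.sum_div, ← hk, Int.cast_sum]
  refine ⟨k - z, ?_⟩
  simp only [neg_div, Finset.sum_neg_distrib, Finset.sum_sub_distrib] at hz ⊢
  push_cast
  linarith

theorem stmt_11 (d N n : ℕ) (hN : 0 < N)
    (γ δ : Fin (d + 2) → ℤ)
    (hγ0 : ∀ j, γ j ≠ 0) (hγsum : ∑ j, γ j = 0)
    (hgcd : Finset.univ.gcd γ = 1)
    (hδ : (N : ℤ) ∣ ∑ j, δ j)
    (r s : ℕ)
    (hr : r = (Finset.univ.filter fun j => γ j < 0).card)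
    (hs : s = (Finset.univ.filter fun j => 0 < γ j).card)
    (α β : Fin n → ℚ)
    (hα : ∀ i, α i ∈ Set.Ioc (0 : ℚ) 1) (hβ : ∀ i, β i ∈ Set.Ioc (0 : ℚ) 1)
    (hcop : IsCoprime (paramPoly α) (paramPoly β))
    (heq : (∏ j ∈ Finset.univ.filter fun j => γ j < 0,
          (X ^ (-γ j).toNat - C (e2pi ((δ j : ℚ) / N)))) * paramPoly β =
        (∏ j ∈ Finset.univ.filter fun j => 0 < γ j,
          (X ^ (γ j).toNat - C (e2pi (-(δ j : ℚ) / N)))) * paramPoly α) :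
    ∃ z : ℤ, (∑ i, (α i - β i)) = ((r : ℚ) - s) / 2 + z :=
  stmt_11_general d N n γ δ hγ0 hδ r s hr hs α β heq
end

section
/- Let A(x) ∈ ℚ(ζ_n)[x] be a monic polynomial all of whose roots are roots of unity. Then A(x) can be written as (Π_{j=1}^l (x^{k_j} - ζ_n^{r_j})) / (Π_{j=l+1}^{l+l'} (x^{k_j} - ζ_n^{r_j})) for some nonnegative integer l', positive integers l, k_1,…,k_{l+l'}, r_1,…,r_{l+l'}, with Σ_{j≤l} k_j - Σ_{j>l} k_j = deg A and gcd(k_1,…,k_{l+l'}) = 1. -/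
/-!
The roots of `A` form a multiset stable under `Gal(ℚ̄ / ℚ(ζ_n))`. For a root of unity `x` of
order `m` put `t = m / gcd(n, m)`; then `x ^ t` is an `n`-th root of unity `ζ ^ r`, and the
conjugates of `x` over `ℚ(ζ_n)` are the `y` of order `m` with `y ^ t = x ^ t`: by the Chinese
remainder theorem `y = x ^ b` with `b ≡ 1 [MOD n]` and `b` coprime to `n m`, and `ξ ↦ ξ ^ b` on
`ℚ(ζ_{nm})` fixes `ζ_n`. Hence the roots of `X ^ t - ζ ^ r` are the orbit of `x` together with a
stable set of roots of unity of smaller order, and induction on the order writes every orbit, and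
so `A`, as a quotient of products of binomials `X ^ k - ζ ^ r`. The factor `X - ζ ^ n = X - 1`,
put in both numerator and denominator, makes the exponents coprime.
-/

open Polynomial

section GaloisOrbit

variable {K : Type*} [Field K] {n s : ℕ} {x y z : K}

noncomputable def orbitExponent (n : ℕ) (x : K) : ℕ := orderOf x / n.gcd (orderOf x)

/-- Models the orbit of a root of unity `x` under `Gal(ℚ̄ / ℚ(ζ_n))`; it is empty when `x` has
infinite order. -/
noncomputable def galoisOrbit (n : ℕ) (x : K) : Multiset K :=
  (nthRoots (orbitExponent n x) (x ^ orbitExponent n x)).filter (orderOf · = orderOf x)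

theorem orbitExponent_pos (hx : 0 < orderOf x) : 0 < orbitExponent n x :=
  Nat.div_pos (Nat.gcd_le_right _ hx) (Nat.gcd_pos_of_pos_right _ hx)

theorem orbitExponent_mul_gcd (n : ℕ) (x : K) :
    orbitExponent n x * n.gcd (orderOf x) = orderOf x :=
  Nat.div_mul_cancel (Nat.gcd_dvd_right _ _)

theorem orbitExponent_dvd (hx : 0 < orderOf x) (h : orderOf x ∣ s * n) :
    orbitExponent n x ∣ s := by
  rw [orbitExponent, Nat.div_dvd_iff_dvd_mul (Nat.gcd_dvd_right _ _)
    (Nat.gcd_pos_of_pos_right _ hx), ← Nat.gcd_mul_right]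
  exact Nat.dvd_gcd (by rwa [mul_comm]) (dvd_mul_right _ _)

theorem mem_galoisOrbit : y ∈ galoisOrbit n x ↔
    0 < orderOf x ∧ orderOf y = orderOf x ∧ y ^ orbitExponent n x = x ^ orbitExponent n x := by
  rcases (orderOf x).eq_zero_or_pos with h0 | hx
  · simp [galoisOrbit, orbitExponent, h0, nthRoots_zero]
  rw [galoisOrbit, Multiset.mem_filter, mem_nthRoots (orbitExponent_pos hx)]
  tauto

theorem self_mem_galoisOrbit (hx : 0 < orderOf x) : x ∈ galoisOrbit n x :=
  mem_galoisOrbit.2 ⟨hx, rfl, rfl⟩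

theorem galoisOrbit_eq_of_mem (h : y ∈ galoisOrbit n x) : galoisOrbit n y = galoisOrbit n x := by
  obtain ⟨-, hord, hpow⟩ := mem_galoisOrbit.1 h
  simp only [galoisOrbit, orbitExponent, hord] at hpow ⊢
  rw [hpow]

theorem mem_galoisOrbit_symm (h : y ∈ galoisOrbit n x) : x ∈ galoisOrbit n y := by
  rw [galoisOrbit_eq_of_mem h]
  exact self_mem_galoisOrbit (mem_galoisOrbit.1 h).1

theorem mem_galoisOrbit_iff_of_mem (h : y ∈ galoisOrbit n x) :
    y ∈ galoisOrbit n z ↔ x ∈ galoisOrbit n z :=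
  ⟨fun hz => galoisOrbit_eq_of_mem hz ▸ mem_galoisOrbit_symm h,
    fun hz => galoisOrbit_eq_of_mem hz ▸ h⟩

theorem pow_eq_pow_of_mem_galoisOrbit (h : y ∈ galoisOrbit n x) (hs : (x ^ s) ^ n = 1) :
    y ^ s = x ^ s := by
  rw [← pow_mul] at hs
  obtain ⟨w, rfl⟩ := orbitExponent_dvd (mem_galoisOrbit.1 h).1 (orderOf_dvd_of_pow_eq_one hs)
  rw [pow_mul, pow_mul, (mem_galoisOrbit.1 h).2.2]

theorem nthRoots_nodup_of_ne_zero [CharZero K] {η : K} (hη : η ≠ 0) (s : ℕ) :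
    (nthRoots s η).Nodup := by
  rcases s.eq_zero_or_pos with rfl | hs
  · simp [nthRoots_zero]
  exact nodup_roots (separable_X_pow_sub_C η (Nat.cast_ne_zero.2 hs.ne') hη)

theorem nodup_galoisOrbit [CharZero K] (n : ℕ) (x : K) : (galoisOrbit n x).Nodup := by
  by_cases hx : x = 0
  · simp [galoisOrbit, orbitExponent, hx, nthRoots_zero]
  exact (nthRoots_nodup_of_ne_zero (pow_ne_zero _ hx) _).filter _

theorem mem_nthRoots_iff_of_mem_galoisOrbit {η : K} (hη : η ^ n = 1) (h : y ∈ galoisOrbit n x) :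
    y ∈ nthRoots s η ↔ x ∈ nthRoots s η := by
  rcases s.eq_zero_or_pos with rfl | hs
  · simp [nthRoots_zero]
  rw [mem_nthRoots hs, mem_nthRoots hs]
  constructor
  · rintro rfl
    exact pow_eq_pow_of_mem_galoisOrbit (mem_galoisOrbit_symm h) hη
  · rintro rfl
    exact pow_eq_pow_of_mem_galoisOrbit h hη

theorem exists_pow_eq_of_mem_galoisOrbit (h : y ∈ galoisOrbit n x) :
    ∃ b, b ≡ 1 [MOD n] ∧ b.Coprime (n * orderOf x) ∧ x ^ b = y := by
  obtain ⟨hx, hord, hpow⟩ := mem_galoisOrbit.1 h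
  have hfin : IsOfFinOrder x := orderOf_pos_iff.1 hx
  have hxprim : IsPrimitiveRoot x (orderOf x) := IsPrimitiveRoot.orderOf x
  have hyprim : IsPrimitiveRoot y (orderOf x) := hord ▸ IsPrimitiveRoot.orderOf y
  have : NeZero (orderOf x) := ⟨hx.ne'⟩
  obtain ⟨c, -, rfl⟩ := hxprim.eq_pow_of_pow_eq_one hyprim.pow_eq_one
  have hc : c.Coprime (orderOf x) := (hxprim.pow_iff_coprime hx c).1 hyprim
  -- `x ^ (c t) = x ^ t` with `t * gcd(n, m) = m` forces `c ≡ 1` modulo `gcd(n, m)`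
  have hc1 : 1 ≡ c [MOD n.gcd (orderOf x)] := by
    rw [← pow_mul, hfin.pow_eq_pow_iff_modEq, ← orbitExponent_mul_gcd n x, mul_comm] at hpow
    exact (Nat.ModEq.mul_right_cancel' (orbitExponent_pos hx).ne' (by rwa [one_mul])).symm
  obtain ⟨b, hbn, hbm⟩ := Nat.chineseRemainder' hc1
  exact ⟨b, hbn, Nat.Coprime.mul_right (hbn.gcd_eq.trans (Nat.gcd_one_left n))
    (hbm.gcd_eq.trans hc), hfin.pow_eq_pow_iff_modEq.2 hbm⟩

end GaloisOrbit

section BinomialCombinations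

variable {K : Type*} [Field K] {ζ : K}

noncomputable def binomial (ζ : K) (p : ℕ+ × ℕ+) : K[X] := X ^ (p.1 : ℕ) - C (ζ ^ (p.2 : ℕ))

theorem monic_binomial (ζ : K) (p : ℕ+ × ℕ+) : (binomial ζ p).Monic :=
  monic_X_pow_sub_C _ p.1.ne_zero

theorem natDegree_binomial (ζ : K) (p : ℕ+ × ℕ+) : (binomial ζ p).natDegree = p.1 :=
  natDegree_X_pow_sub_C

noncomputable def binomialRoots (ζ : K) (P : Multiset (ℕ+ × ℕ+)) : Multiset K :=
  (P.map fun p => nthRoots p.1 (ζ ^ (p.2 : ℕ))).sum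

@[simp]
theorem binomialRoots_zero : binomialRoots ζ 0 = 0 := by
  simp [binomialRoots]

@[simp]
theorem binomialRoots_add (P Q : Multiset (ℕ+ × ℕ+)) :
    binomialRoots ζ (P + Q) = binomialRoots ζ P + binomialRoots ζ Q := by
  simp [binomialRoots]

@[simp]
theorem binomialRoots_cons (p : ℕ+ × ℕ+) (P : Multiset (ℕ+ × ℕ+)) :
    binomialRoots ζ (p ::ₘ P) = nthRoots p.1 (ζ ^ (p.2 : ℕ)) + binomialRoots ζ P := by
  simp [binomialRoots]

/-- The multisets `R` with `∏_{ρ ∈ R} (X - ρ) = ∏_P (X ^ k - ζ ^ r) / ∏_N (X ^ k - ζ ^ r)` for some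
`P` and `N`, pairs `(k, r)` taken with multiplicity. -/
noncomputable def binomialCombinations (ζ : K) : AddSubmonoid (Multiset K) where
  carrier := {R | ∃ P N, R + binomialRoots ζ N = binomialRoots ζ P}
  zero_mem' := ⟨0, 0, by simp⟩
  add_mem' := by
    rintro R S ⟨P, N, hR⟩ ⟨P', N', hS⟩
    exact ⟨P + P', N + N', by rw [binomialRoots_add, binomialRoots_add, ← hR, ← hS]; abel⟩

theorem nthRoots_mem_binomialCombinations {k r : ℕ} (hk : 0 < k) (hr : 0 < r) :
    nthRoots k (ζ ^ r) ∈ binomialCombinations ζ :=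
  ⟨{(⟨k, hk⟩, ⟨r, hr⟩)}, 0, by simp [binomialRoots]⟩

theorem mem_binomialCombinations_of_add_mem {R S : Multiset K}
    (h : R + S ∈ binomialCombinations ζ) (hS : S ∈ binomialCombinations ζ) :
    R ∈ binomialCombinations ζ := by
  obtain ⟨P, N, h⟩ := h
  obtain ⟨P', N', hS⟩ := hS
  exact ⟨P + N', N + P', by rw [binomialRoots_add, binomialRoots_add, ← h, ← hS]; abel⟩

theorem roots_prod_binomial (ζ : K) (P : Multiset (ℕ+ × ℕ+)) :
    ((P.map (binomial ζ)).prod).roots = binomialRoots ζ P := by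
  rw [roots_multiset_prod _ fun h0 => ?_]
  · simp [Multiset.bind, Multiset.join, binomialRoots, binomial, nthRoots]
  obtain ⟨p, -, hp⟩ := Multiset.mem_map.1 h0
  exact (monic_binomial ζ p).ne_zero hp

theorem mul_prod_binomial_eq_of_roots [IsAlgClosed K] {A : K[X]} (hA : A.Monic)
    {P N : Multiset (ℕ+ × ℕ+)} (h : A.roots + binomialRoots ζ N = binomialRoots ζ P) :
    A * (N.map (binomial ζ)).prod = (P.map (binomial ζ)).prod := by
  have hmonic (Q : Multiset (ℕ+ × ℕ+)) : (Q.map (binomial ζ)).prod.Monic :=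
    monic_multiset_prod_of_monic _ _ fun p _ => monic_binomial ζ p
  calc A * (N.map (binomial ζ)).prod
      = ((A * (N.map (binomial ζ)).prod).roots.map (X - C ·)).prod :=
        (IsAlgClosed.splits _).eq_prod_roots_of_monic (hA.mul (hmonic N))
    _ = (((P.map (binomial ζ)).prod).roots.map (X - C ·)).prod := by
        rw [roots_mul (hA.mul (hmonic N)).ne_zero, roots_prod_binomial, roots_prod_binomial, h]
    _ = (P.map (binomial ζ)).prod :=
        ((IsAlgClosed.splits _).eq_prod_roots_of_monic (hmonic P)).symm

theorem sum_sub_sum_eq_natDegree {ι : Type*} {A : K[X]} (hA : A ≠ 0) {s t : Finset ι}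
    {q : ι → ℕ+ × ℕ+}
    (h : A * ∏ j ∈ t, binomial ζ (q j) = ∏ j ∈ s, binomial ζ (q j)) :
    ∑ j ∈ s, (((q j).1 : ℕ) : ℤ) - ∑ j ∈ t, (((q j).1 : ℕ) : ℤ) = A.natDegree := by
  have hdeg (u : Finset ι) : (∏ j ∈ u, binomial ζ (q j)).natDegree = ∑ j ∈ u, ((q j).1 : ℕ) := by
    rw [natDegree_prod_of_monic _ _ fun j _ => monic_binomial ζ (q j)]
    simp only [natDegree_binomial]
  have := congrArg natDegree h
  rw [natDegree_mul hA (monic_prod_of_monic _ _ fun j _ => monic_binomial ζ (q j)).ne_zero,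
    hdeg, hdeg] at this
  rw [← Nat.cast_sum, ← Nat.cast_sum, ← this]
  push_cast
  ring

end BinomialCombinations

section GaloisStable

variable {K : Type*} [Field K] [DecidableEq K] {n : ℕ} {ζ : K}

def IsGaloisStable (n : ℕ) (R : Multiset K) : Prop :=
  ∀ x, ∀ y ∈ galoisOrbit n x, R.count y = R.count x

theorem isGaloisStable_of_nodup {S : Multiset K} (hS : S.Nodup)
    (h : ∀ x, ∀ y ∈ galoisOrbit n x, y ∈ S ↔ x ∈ S) : IsGaloisStable n S := by
  intro x y hy
  simp only [Multiset.count_eq_of_nodup hS, h x y hy]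

theorem isGaloisStable_galoisOrbit [CharZero K] (n : ℕ) (z : K) :
    IsGaloisStable n (galoisOrbit n z) :=
  isGaloisStable_of_nodup (nodup_galoisOrbit n z) fun _ _ hy => mem_galoisOrbit_iff_of_mem hy

theorem mem_binomialCombinations_of_isGaloisStable [CharZero K] {R : Multiset K}
    (hR : IsGaloisStable n R) (hfin : ∀ x ∈ R, 0 < orderOf x)
    (horbit : ∀ x ∈ R, galoisOrbit n x ∈ binomialCombinations ζ) :
    R ∈ binomialCombinations ζ := by
  induction hcard : Multiset.card R using Nat.strong_induction_on generalizing R with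
  | _ N ih =>
  rcases Multiset.empty_or_exists_mem R with rfl | ⟨x, hx⟩
  · exact zero_mem _
  set O := galoisOrbit n x
  set c := R.count x
  have hle : c • O ≤ R := Multiset.le_iff_count.2 fun y => by
    rw [Multiset.count_nsmul, Multiset.count_eq_of_nodup (nodup_galoisOrbit n x)]
    split_ifs with hy
    · rw [mul_one, hR x y hy]
    · rw [mul_zero]
      exact Nat.zero_le _
  have hxO : x ∈ c • O :=
    Multiset.mem_nsmul.2 ⟨(Multiset.count_pos.2 hx).ne', self_mem_galoisOrbit (hfin x hx)⟩
  have hlt : Multiset.card (R - c • O) < N := by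
    rw [Multiset.card_sub hle, ← hcard]
    exact Nat.sub_lt (Multiset.card_pos_iff_exists_mem.2 ⟨x, hx⟩)
      (Multiset.card_pos_iff_exists_mem.2 ⟨x, hxO⟩)
  have hstable : IsGaloisStable n (R - c • O) := fun x' y hy => by
    rw [Multiset.count_sub, Multiset.count_sub, Multiset.count_nsmul, Multiset.count_nsmul,
      hR x' y hy, isGaloisStable_galoisOrbit n x x' y hy]
  have hsub : ∀ y ∈ R - c • O, y ∈ R := fun y hy => Multiset.mem_of_le tsub_le_self hy
  rw [← tsub_add_cancel_of_le hle]
  exact add_mem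
    (ih _ hlt hstable (fun y hy => hfin y (hsub y hy)) (fun y hy => horbit y (hsub y hy)) rfl)
    (nsmul_mem (horbit x hx) c)

theorem galoisOrbit_mem_binomialCombinations [CharZero K] [NeZero n] (hζ : IsPrimitiveRoot ζ n)
    {x : K} (hx : 0 < orderOf x) : galoisOrbit n x ∈ binomialCombinations ζ := by
  induction hm : orderOf x using Nat.strong_induction_on generalizing x with
  | _ m ih =>
  set t := orbitExponent n x
  have ht : 0 < t := orbitExponent_pos hx
  have hxt : (x ^ t) ^ n = 1 := by
    obtain ⟨w, hw⟩ := Nat.gcd_dvd_left n (orderOf x)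
    rw [hw, pow_mul, ← pow_mul x t, orbitExponent_mul_gcd, pow_orderOf_eq_one, one_pow]
  have hroots : nthRoots t (x ^ t) ∈ binomialCombinations ζ := by
    obtain ⟨r, -, hr⟩ := hζ.eq_pow_of_pow_eq_one hxt
    rw [← hr, ← mul_one (ζ ^ r), ← hζ.pow_eq_one, ← pow_add]
    exact nthRoots_mem_binomialCombinations ht (by have := NeZero.pos n; omega)
  set lower := (nthRoots t (x ^ t)).filter fun y => ¬orderOf y = orderOf x
  have hsplit : galoisOrbit n x + lower = nthRoots t (x ^ t) := Multiset.filter_add_not _ _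
  have hlower_lt : ∀ y ∈ lower, 0 < orderOf y ∧ orderOf y < m := by
    intro y hy
    obtain ⟨hyroot, hyord⟩ := Multiset.mem_filter.1 hy
    have hym : y ^ orderOf x = 1 := by
      rw [← orbitExponent_mul_gcd n x, pow_mul, (mem_nthRoots ht).1 hyroot, ← pow_mul,
        orbitExponent_mul_gcd, pow_orderOf_eq_one]
    have hdvd := orderOf_dvd_of_pow_eq_one hym
    exact ⟨Nat.pos_of_dvd_of_pos hdvd hx, hm ▸ lt_of_le_of_ne (Nat.le_of_dvd hx hdvd) hyord⟩
  have hlower_stable : IsGaloisStable n lower :=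
    have hx0 : x ^ t ≠ 0 := pow_ne_zero _ (by rintro rfl; simp at hx)
    isGaloisStable_of_nodup ((nthRoots_nodup_of_ne_zero hx0 t).filter _) fun x' y hy => by
      rw [Multiset.mem_filter, Multiset.mem_filter, mem_nthRoots_iff_of_mem_galoisOrbit hxt hy,
        (mem_galoisOrbit.1 hy).2.1]
  refine mem_binomialCombinations_of_add_mem (hsplit ▸ hroots)
    (mem_binomialCombinations_of_isGaloisStable hlower_stable (fun y hy => (hlower_lt y hy).1)
      fun y hy => ih _ (hlower_lt y hy).2 (hlower_lt y hy).1 rfl)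

end GaloisStable

open IntermediateField

theorem exists_algHom_adjoin_pow {L b : ℕ} [NeZero L] {ξ : ℂ} (hξ : IsPrimitiveRoot ξ L)
    (hb : b.Coprime L) :
    ∃ σ : ℚ⟮ξ⟯ →ₐ[ℚ] ℂ, ∀ e : ℚ⟮ξ⟯, (e : ℂ) ^ L = 1 → σ e = (e : ℂ) ^ b := by
  have hint : IsIntegral ℚ ξ := (hξ.isIntegral (NeZero.pos L)).tower_top
  have hroot : ξ ^ b ∈ (minpoly ℚ ξ).aroots ℂ := by
    rw [← cyclotomic_eq_minpoly_rat hξ (NeZero.pos L), aroots_def, map_cyclotomic,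
      mem_roots (cyclotomic_ne_zero L ℂ)]
    exact (hξ.pow_of_coprime b hb).isRoot_cyclotomic (NeZero.pos L)
  set σ : ℚ⟮ξ⟯ →ₐ[ℚ] ℂ := (algHomAdjoinIntegralEquiv ℚ hint).symm ⟨ξ ^ b, hroot⟩
  have hgen : σ (AdjoinSimple.gen ℚ ξ) = ξ ^ b := algHomAdjoinIntegralEquiv_symm_apply_gen ℚ hint _
  refine ⟨σ, fun e he => ?_⟩
  obtain ⟨a, -, ha⟩ := hξ.eq_pow_of_pow_eq_one he
  have he : e = AdjoinSimple.gen ℚ ξ ^ a := Subtype.ext (by simp [ha])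
  rw [he, map_pow, hgen]
  simp [← pow_mul, mul_comm]

theorem count_roots_pow_eq {L b : ℕ} [NeZero L] {ξ ζ x : ℂ} (hξ : IsPrimitiveRoot ξ L)
    (hb : b.Coprime L) (hζ : ζ ^ L = 1) (hζb : ζ ^ b = ζ) (hx : x ^ L = 1) {A : ℂ[X]}
    (hA : ∀ k, A.coeff k ∈ ℚ⟮ζ⟯) : A.roots.count (x ^ b) = A.roots.count x := by
  obtain ⟨σ, hσ⟩ := exists_algHom_adjoin_pow hξ hb
  have hmem : ∀ {e : ℂ}, e ^ L = 1 → e ∈ ℚ⟮ξ⟯ := fun he => by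
    obtain ⟨a, -, rfl⟩ := hξ.eq_pow_of_pow_eq_one he
    exact pow_mem (mem_adjoin_simple_self ℚ ξ) a
  have hle : ℚ⟮ζ⟯ ≤ ℚ⟮ξ⟯ := adjoin_simple_le_iff.2 (hmem hζ)
  have hfix : σ.comp (inclusion hle) = ℚ⟮ζ⟯.val := adjoin_algHom_ext ℚ fun z hz => by
    obtain rfl := Set.mem_singleton_iff.1 hz
    exact (hσ _ hζ).trans hζb
  have hlift : A ∈ lifts (algebraMap ℚ⟮ξ⟯ ℂ) :=
    (lifts_iff_coeff_lifts A).2 fun k => ⟨⟨A.coeff k, hle (hA k)⟩, rfl⟩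
  obtain ⟨p, hp⟩ := (mem_lifts A).1 hlift
  have hpσ : p.map (σ : ℚ⟮ξ⟯ →+* ℂ) = A := by
    ext k
    have hk : p.coeff k = inclusion hle ⟨A.coeff k, hA k⟩ := by
      apply Subtype.ext
      simp [← hp]
    rw [coeff_map, hk]
    exact congrArg (fun φ => φ (⟨A.coeff k, hA k⟩ : ℚ⟮ζ⟯)) hfix
  rw [count_roots, count_roots, ← hσ ⟨x, hmem hx⟩ hx]
  nth_rw 1 [← hpσ]
  rw [← hp]
  exact (eq_rootMultiplicity_map (f := (σ : ℚ⟮ξ⟯ →+* ℂ)) σ.injective _).symm.trans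
    (eq_rootMultiplicity_map (algebraMap ℚ⟮ξ⟯ ℂ).injective _)

theorem isGaloisStable_roots {n : ℕ} [NeZero n] {ζ : ℂ} (hζ : IsPrimitiveRoot ζ n)
    {A : ℂ[X]} (hA : ∀ k, A.coeff k ∈ ℚ⟮ζ⟯) : IsGaloisStable n A.roots := by
  intro x y hy
  obtain ⟨b, hbn, hb, rfl⟩ := exists_pow_eq_of_mem_galoisOrbit hy
  have hx := (mem_galoisOrbit.1 hy).1
  have : NeZero (n * orderOf x) := ⟨(Nat.mul_pos (NeZero.pos n) hx).ne'⟩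
  have hζb : ζ ^ b = ζ := by
    rw [← pow_one ζ, ← pow_mul, one_mul, (hζ.isOfFinOrder (NeZero.ne n)).pow_eq_pow_iff_modEq,
      ← hζ.eq_orderOf]
    exact hbn
  exact count_roots_pow_eq (Complex.isPrimitiveRoot_exp _ (NeZero.ne _)) hb
    (by rw [pow_mul, hζ.pow_eq_one, one_pow]) hζb
    (by rw [mul_comm, pow_mul, pow_orderOf_eq_one, one_pow]) hA

theorem prod_filter_lt_append {M α : Type*} [CommMonoid M] {l l' : ℕ} (F : α → M)
    (u : Fin l → α) (v : Fin l' → α) :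
    ∏ j ∈ Finset.univ.filter (fun j : Fin (l + l') => (j : ℕ) < l), F (Fin.append u v j) =
      ∏ i, F (u i) := by
  rw [Finset.prod_filter, Fin.prod_univ_add]
  simp

theorem prod_filter_le_append {M α : Type*} [CommMonoid M] {l l' : ℕ} (F : α → M)
    (u : Fin l → α) (v : Fin l' → α) :
    ∏ j ∈ Finset.univ.filter (fun j : Fin (l + l') => l ≤ (j : ℕ)), F (Fin.append u v j) =
      ∏ i, F (v i) := by
  rw [Finset.prod_filter, Fin.prod_univ_add]
  simp [fun i : Fin l => not_le.2 i.is_lt]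

theorem stmt_14 (n : ℕ) (hn : 0 < n)
    (ζ : ℂ) (hζ : ζ = Complex.exp (2 * Real.pi * Complex.I / n))
    (A : Polynomial ℂ) (hA : A.Monic)
    (hcoeff : ∀ k, A.coeff k ∈ IntermediateField.adjoin ℚ {ζ})
    (hroots : ∀ z : ℂ, A.IsRoot z → ∃ m : ℕ, 0 < m ∧ z ^ m = 1) :
    ∃ (l l' : ℕ), 0 < l ∧
      ∃ k r : Fin (l + l') → ℕ,
        (∀ j, 0 < k j) ∧ (∀ j, 0 < r j) ∧
        A * (∏ j ∈ Finset.univ.filter fun j : Fin (l + l') => l ≤ (j : ℕ),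
              (X ^ k j - C (ζ ^ r j))) =
          (∏ j ∈ Finset.univ.filter fun j : Fin (l + l') => (j : ℕ) < l,
              (X ^ k j - C (ζ ^ r j))) ∧
        (∑ j ∈ Finset.univ.filter fun j : Fin (l + l') => (j : ℕ) < l, (k j : ℤ)) -
            (∑ j ∈ Finset.univ.filter fun j : Fin (l + l') => l ≤ (j : ℕ), (k j : ℤ)) =
          (A.natDegree : ℤ) ∧
        Finset.univ.gcd k = 1 := by
  have : NeZero n := ⟨hn.ne'⟩
  have hζn : IsPrimitiveRoot ζ n := hζ ▸ Complex.isPrimitiveRoot_exp n hn.ne'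
  have hfin : ∀ z ∈ A.roots, 0 < orderOf z := fun z hz => by
    obtain ⟨m, hm, hzm⟩ := hroots z (isRoot_of_mem_roots hz)
    exact orderOf_pos_iff.2 (isOfFinOrder_iff_pow_eq_one.2 ⟨m, hm, hzm⟩)
  obtain ⟨P, N, hPN⟩ := mem_binomialCombinations_of_isGaloisStable
    (isGaloisStable_roots hζn hcoeff) hfin
    fun z hz => galoisOrbit_mem_binomialCombinations hζn (hfin z hz)
  set e : ℕ+ × ℕ+ := (1, n.toPNat hn)
  have hmul := mul_prod_binomial_eq_of_roots hA (P := e ::ₘ P) (N := e ::ₘ N)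
    (by rw [binomialRoots_cons, binomialRoots_cons, ← hPN, add_left_comm])
  set u := e :: P.toList
  set v := e :: N.toList
  set q : Fin (u.length + v.length) → ℕ+ × ℕ+ :=
    Fin.append (fun i => u[(i : ℕ)]) fun i => v[(i : ℕ)]
  have hprod : A * ∏ j ∈ Finset.univ.filter (fun j : Fin _ => u.length ≤ (j : ℕ)),
      binomial ζ (q j) = ∏ j ∈ Finset.univ.filter (fun j : Fin _ => (j : ℕ) < u.length),
      binomial ζ (q j) := by
    rw [prod_filter_lt_append, prod_filter_le_append, Fin.prod_univ_fun_getElem,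
      Fin.prod_univ_fun_getElem]
    simpa [u, v] using hmul
  refine ⟨u.length, v.length, Nat.succ_pos _, fun j => (q j).1, fun j => (q j).2,
    fun j => (q j).1.pos, fun j => (q j).2.pos, hprod, sum_sub_sum_eq_natDegree hA.ne_zero hprod,
    ?_⟩
  simpa [q, u, e] using Finset.gcd_dvd (f := fun j => ((q j).1 : ℕ))
    (Finset.mem_univ (Fin.castAdd v.length (⟨0, by simp [u]⟩ : Fin u.length)))
end
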